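/- arXiv:0707.3729 — 3 statements merged into one kernel-verified Lean document; each statement's English description precedes it below -/
import Mathlib

section
/- Let (f_ρ)_{ρ>0} be a family of measurable functions on (0,∞) such that for some constants 0 < p < γ < q and c > 0: (i) for every a > 0, sup_{0<v≤a} v^{−q} F̄_ρ(1) |f_ρ(v)| → 0 as ρ → 0⁺, and (ii) F̄_ρ(1)|f_ρ(v)| ≤ c v^p for all ρ > 0 and v > 0. Then lim_{ρ→0⁺} ∫_{(0,∞)} f_ρ(v) dF_ρ(v) = 0. -/
/-!
Write `G t = μ (Ioi t)`. Regular variation of index `-γ` puts the doubling ratio `G (2v) / G v`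
strictly between `2^(-q)` and `2^(-p)` for large `v`, and summing over dyadic shells turns this
into the Karamata-type bounds `∫_{(t,∞)} x^p dμ ≤ C t^p G t` and `∫_{(0,t]} x^q dμ ≤ C t^q G t`
for large `t`. Substituting `v = ρ x` and splitting at `v = a`, hypothesis (i) bounds the part
over `(0, a]` by a multiple of `ε a^q G (a/ρ) / G (1/ρ)` and hypothesis (ii) bounds the rest by a
multiple of `c a^p G (a/ρ) / G (1/ρ)`. As `ρ → 0` the ratio tends to `a^(-γ)`, so letting `ε → 0`
and then `a → ∞` leaves `c a^(p-γ) → 0`.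
-/

open MeasureTheory Filter Topology Set
open scoped ENNReal

section Doubling

variable {M : Type*} [CommMonoid M] [Preorder M] [MulLeftMono M] {φ : ℝ → M} {r : M} {t : ℝ}

lemma apply_two_pow_mul_le (ht : 0 ≤ t) (h : ∀ v, t ≤ v → φ (2 * v) ≤ r * φ v) (k : ℕ) :
    φ (2 ^ k * t) ≤ r ^ k * φ t := by
  induction k with
  | zero => simp
  | succ k ih =>
    calc φ (2 ^ (k + 1) * t) = φ (2 * (2 ^ k * t)) := by ring_nf
      _ ≤ r * φ (2 ^ k * t) := h _ (le_mul_of_one_le_left ht (one_le_pow₀ one_le_two))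
      _ ≤ r * (r ^ k * φ t) := mul_le_mul_right ih r
      _ = r ^ (k + 1) * φ t := by rw [pow_succ', mul_assoc]

lemma pow_mul_le_apply_two_pow_mul (ht : 0 ≤ t) (h : ∀ v, t ≤ v → r * φ v ≤ φ (2 * v))
    (k : ℕ) : r ^ k * φ t ≤ φ (2 ^ k * t) :=
  apply_two_pow_mul_le (M := Mᵒᵈ) ht h k

end Doubling

lemma Ioi_subset_iUnion_Ioc_pow_mul {y t : ℝ} (hy : 1 < y) (ht : 0 < t) :
    Ioi t ⊆ ⋃ k : ℕ, Ioc (y ^ k * t) (y ^ (k + 1) * t) := by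
  intro x hx
  obtain ⟨n, hn₁, hn₂⟩ := exists_mem_Ioc_zpow (div_pos (ht.trans hx) ht) hy
  have hn : 0 ≤ n := by
    by_contra! hneg
    have : y ^ (n + 1) ≤ 1 := zpow_le_one_of_nonpos₀ hy.le (by omega)
    exact (one_lt_div ht).2 hx |>.not_ge (hn₂.trans this)
  lift n to ℕ using hn
  refine mem_iUnion.2 ⟨n, (lt_div_iff₀ ht).1 ?_, (div_le_iff₀ ht).1 ?_⟩
  · simpa using hn₁
  · exact_mod_cast hn₂

lemma Ioc_zero_subset_iUnion_Ioc_div_pow {y t : ℝ} (hy : 1 < y) :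
    Ioc 0 t ⊆ ⋃ k : ℕ, Ioc (t / y ^ (k + 1)) (t / y ^ k) := by
  intro x ⟨hx₀, hxt⟩
  have hy₀ : 0 < y := one_pos.trans hy
  obtain ⟨n, hn₁, hn₂⟩ := exists_nat_pow_near ((one_le_div hx₀).2 hxt) hy
  refine mem_iUnion.2 ⟨n, (div_lt_iff₀ (pow_pos hy₀ _)).2 ?_, (le_div_iff₀ (pow_pos hy₀ _)).2 ?_⟩
  · linarith [(div_lt_iff₀ hx₀).1 hn₂]
  · linarith [(le_div_iff₀ hx₀).1 hn₁]

lemma setLIntegral_le_mul_geometric_of_subset_iUnion {α : Type*} [MeasurableSpace α]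
    {μ : Measure α} {g : α → ℝ≥0∞} {s : Set α} {S : ℕ → Set α} (hcov : s ⊆ ⋃ k, S k)
    {A : ℝ≥0∞} {θ : ℝ} (hθ₀ : 0 ≤ θ) (hθ₁ : θ < 1)
    (h : ∀ k, ∫⁻ x in S k, g x ∂μ ≤ A * ENNReal.ofReal (θ ^ k)) :
    ∫⁻ x in s, g x ∂μ ≤ A * ENNReal.ofReal (1 - θ)⁻¹ := by
  calc ∫⁻ x in s, g x ∂μ ≤ ∑' k, ∫⁻ x in S k, g x ∂μ :=
        (lintegral_mono_set hcov).trans (lintegral_iUnion_le _ _)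
    _ ≤ ∑' k, A * ENNReal.ofReal θ ^ k :=
        ENNReal.tsum_le_tsum fun k => by rw [← ENNReal.ofReal_pow hθ₀]; exact h k
    _ = A * ENNReal.ofReal (1 - θ)⁻¹ := by
        rw [ENNReal.tsum_mul_left, ENNReal.tsum_geometric, ENNReal.ofReal_inv_of_pos (by linarith),
          ENNReal.ofReal_sub _ hθ₀, ENNReal.ofReal_one]

lemma setLIntegral_Ioc_rpow_le (μ : Measure ℝ) {a b p : ℝ} (ha : 0 ≤ a) (hp : 0 ≤ p) :
    ∫⁻ x in Ioc a b, ENNReal.ofReal (x ^ p) ∂μ ≤ ENNReal.ofReal (b ^ p) * μ (Ioi a) := by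
  calc ∫⁻ x in Ioc a b, ENNReal.ofReal (x ^ p) ∂μ ≤ ∫⁻ _ in Ioc a b, ENNReal.ofReal (b ^ p) ∂μ :=
        setLIntegral_mono' measurableSet_Ioc fun x hx =>
          ENNReal.ofReal_le_ofReal (Real.rpow_le_rpow (ha.trans hx.1.le) hx.2 hp)
    _ = ENNReal.ofReal (b ^ p) * μ (Ioc a b) := setLIntegral_const _ _
    _ ≤ ENNReal.ofReal (b ^ p) * μ (Ioi a) := by gcongr; exact Ioc_subset_Ioi_self

lemma rpow_mul_lt_one_of_lt_rpow_neg {b p r : ℝ} (hb : 0 < b) (hr : r < b ^ (-p)) :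
    b ^ p * r < 1 := by
  rwa [Real.rpow_neg hb.le, ← one_div, lt_div_iff₀' (by positivity)] at hr

lemma one_lt_rpow_mul_of_rpow_neg_lt {b q s : ℝ} (hb : 0 < b) (hs : b ^ (-q) < s) :
    1 < b ^ q * s := by
  rwa [Real.rpow_neg hb.le, inv_lt_iff_one_lt_mul₀' (by positivity)] at hs

lemma setLIntegral_Ioi_rpow_le_of_decay {μ : Measure ℝ} {p r t : ℝ} (hp : 0 ≤ p) (hr₀ : 0 ≤ r)
    (hr : r < 2 ^ (-p)) (ht : 0 < t)
    (hdecay : ∀ v, t ≤ v → μ (Ioi (2 * v)) ≤ ENNReal.ofReal r * μ (Ioi v)) :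
    ∫⁻ x in Ioi t, ENNReal.ofReal (x ^ p) ∂μ
      ≤ ENNReal.ofReal (2 ^ p * (1 - 2 ^ p * r)⁻¹ * t ^ p) * μ (Ioi t) := by
  have hθ := rpow_mul_lt_one_of_lt_rpow_neg two_pos hr
  have hshell (k : ℕ) : ∫⁻ x in Ioc (2 ^ k * t) (2 ^ (k + 1) * t), ENNReal.ofReal (x ^ p) ∂μ
      ≤ ENNReal.ofReal (2 ^ p * t ^ p) * μ (Ioi t) * ENNReal.ofReal ((2 ^ p * r) ^ k) := by
    calc _ ≤ ENNReal.ofReal ((2 ^ (k + 1) * t) ^ p) * μ (Ioi (2 ^ k * t)) :=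
          setLIntegral_Ioc_rpow_le μ (by positivity) hp
      _ ≤ ENNReal.ofReal ((2 ^ (k + 1) * t) ^ p) * (ENNReal.ofReal r ^ k * μ (Ioi t)) := by
          gcongr; exact apply_two_pow_mul_le (φ := fun v => μ (Ioi v)) ht.le hdecay k
      _ = ENNReal.ofReal (2 ^ p * t ^ p) * μ (Ioi t) * ENNReal.ofReal ((2 ^ p * r) ^ k) := by
          rw [← ENNReal.ofReal_pow hr₀, ← mul_assoc, ← ENNReal.ofReal_mul (by positivity),
            mul_right_comm, ← ENNReal.ofReal_mul (by positivity),
            Real.mul_rpow (by positivity) ht.le,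
            ← Real.rpow_pow_comm zero_le_two]
          ring_nf
  calc ∫⁻ x in Ioi t, ENNReal.ofReal (x ^ p) ∂μ
      ≤ ENNReal.ofReal (2 ^ p * t ^ p) * μ (Ioi t) * ENNReal.ofReal (1 - 2 ^ p * r)⁻¹ :=
        setLIntegral_le_mul_geometric_of_subset_iUnion (Ioi_subset_iUnion_Ioc_pow_mul one_lt_two ht)
          (by positivity) hθ hshell
    _ = ENNReal.ofReal (2 ^ p * (1 - 2 ^ p * r)⁻¹ * t ^ p) * μ (Ioi t) := by
        rw [mul_right_comm, ← ENNReal.ofReal_mul (by positivity)]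
        ring_nf

lemma setLIntegral_Ioc_div_two_pow_rpow_le_of_growth {μ : Measure ℝ} {q s t : ℝ} (hq : 0 ≤ q)
    (hs : 0 < s) (ht : 0 < t) (k : ℕ)
    (hgrowth : ∀ v, t / 2 ^ (k + 1) ≤ v → ENNReal.ofReal s * μ (Ioi v) ≤ μ (Ioi (2 * v))) :
    ∫⁻ x in Ioc (t / 2 ^ (k + 1)) (t / 2 ^ k), ENNReal.ofReal (x ^ q) ∂μ
      ≤ ENNReal.ofReal (s⁻¹ * t ^ q) * μ (Ioi t) * ENNReal.ofReal ((2 ^ q * s)⁻¹ ^ k) := by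
  have hu : μ (Ioi (t / 2 ^ (k + 1))) ≤ ENNReal.ofReal (s ^ (k + 1))⁻¹ * μ (Ioi t) := by
    rw [ENNReal.ofReal_inv_of_pos (by positivity), ← ENNReal.div_eq_inv_mul,
      ENNReal.le_div_iff_mul_le (by simp [hs]) (by simp), mul_comm, ENNReal.ofReal_pow hs.le]
    simpa [mul_div_cancel₀] using pow_mul_le_apply_two_pow_mul (φ := fun v => μ (Ioi v))
      (by positivity) hgrowth (k + 1)
  have hcoef : (t / 2 ^ k) ^ q * (s ^ (k + 1))⁻¹ = s⁻¹ * t ^ q * (2 ^ q * s)⁻¹ ^ k := by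
    rw [Real.div_rpow ht.le (by positivity), ← Real.rpow_pow_comm zero_le_two, mul_inv,
      mul_pow, inv_pow, inv_pow, pow_succ]
    field_simp
  calc ∫⁻ x in Ioc (t / 2 ^ (k + 1)) (t / 2 ^ k), ENNReal.ofReal (x ^ q) ∂μ
      ≤ ENNReal.ofReal ((t / 2 ^ k) ^ q) * μ (Ioi (t / 2 ^ (k + 1))) :=
        setLIntegral_Ioc_rpow_le μ (by positivity) hq
    _ ≤ ENNReal.ofReal ((t / 2 ^ k) ^ q) * (ENNReal.ofReal (s ^ (k + 1))⁻¹ * μ (Ioi t)) := by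
        gcongr
    _ = ENNReal.ofReal (s⁻¹ * t ^ q) * μ (Ioi t) * ENNReal.ofReal ((2 ^ q * s)⁻¹ ^ k) := by
        rw [← mul_assoc, ← ENNReal.ofReal_mul (by positivity), hcoef,
          ENNReal.ofReal_mul (by positivity), mul_right_comm]

lemma setLIntegral_Ioc_two_mul_rpow_le_of_growth {μ : Measure ℝ} {q s t₁ t : ℝ} (hq : 0 ≤ q)
    (hs : 2 ^ (-q) < s) (ht₁ : 0 < t₁)
    (hgrowth : ∀ v, t₁ ≤ v → ENNReal.ofReal s * μ (Ioi v) ≤ μ (Ioi (2 * v))) :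
    ∫⁻ x in Ioc (2 * t₁) t, ENNReal.ofReal (x ^ q) ∂μ
      ≤ ENNReal.ofReal (s⁻¹ * (1 - (2 ^ q * s)⁻¹)⁻¹ * t ^ q) * μ (Ioi t) := by
  have hs₀ : 0 < s := (Real.rpow_pos_of_pos two_pos _).trans hs
  have hθ := inv_lt_one_of_one_lt₀ (one_lt_rpow_mul_of_rpow_neg_lt two_pos hs)
  set S : ℕ → Set ℝ := fun k => Ioc (2 * t₁) t ∩ Ioc (t / 2 ^ (k + 1)) (t / 2 ^ k)
  have hcov : Ioc (2 * t₁) t ⊆ ⋃ k, S k := fun x hx =>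
    (inter_iUnion _ _).subset ⟨hx, Ioc_zero_subset_iUnion_Ioc_div_pow one_lt_two
      (Ioc_subset_Ioc_left (by positivity) hx)⟩
  have hshell (k : ℕ) : ∫⁻ x in S k, ENNReal.ofReal (x ^ q) ∂μ
      ≤ ENNReal.ofReal (s⁻¹ * t ^ q) * μ (Ioi t) * ENNReal.ofReal ((2 ^ q * s)⁻¹ ^ k) := by
    -- a shell meets `(2 t₁, t]` only if it lies above `t₁`, where the growth bound holds
    by_cases hk : t₁ ≤ t / 2 ^ (k + 1)
    · have ht : 0 < t := (div_pos_iff_of_pos_right (by positivity)).1 (ht₁.trans_le hk)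
      exact (lintegral_mono_set inter_subset_right).trans
        (setLIntegral_Ioc_div_two_pow_rpow_le_of_growth hq hs₀ ht k
          fun v hv => hgrowth v (hk.trans hv))
    · have hS : S k = ∅ := by
        refine eq_empty_of_forall_notMem fun x ⟨⟨hx, _⟩, _, hxk⟩ => hk ?_
        rw [pow_succ, ← div_div, le_div_iff₀ two_pos]
        linarith
      simp [hS]
  calc ∫⁻ x in Ioc (2 * t₁) t, ENNReal.ofReal (x ^ q) ∂μ
      ≤ ENNReal.ofReal (s⁻¹ * t ^ q) * μ (Ioi t) * ENNReal.ofReal (1 - (2 ^ q * s)⁻¹)⁻¹ :=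
        setLIntegral_le_mul_geometric_of_subset_iUnion hcov (by positivity) hθ hshell
    _ = ENNReal.ofReal (s⁻¹ * (1 - (2 ^ q * s)⁻¹)⁻¹ * t ^ q) * μ (Ioi t) := by
        rw [mul_right_comm, ← ENNReal.ofReal_mul' (inv_nonneg.2 (by linarith))]
        ring_nf

lemma ofReal_mul_measure_Ioi_le_of_growth {μ : Measure ℝ} {q s t₁ t : ℝ} (hq : 0 ≤ q)
    (hs : 2 ^ (-q) ≤ s) (ht₁ : 0 < t₁) (ht : t₁ ≤ t)
    (hgrowth : ∀ v, t₁ ≤ v → ENNReal.ofReal s * μ (Ioi v) ≤ μ (Ioi (2 * v))) :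
    ENNReal.ofReal (s * t₁ ^ q) * μ (Ioi t₁) ≤ ENNReal.ofReal (t ^ q) * μ (Ioi t) := by
  have hs₀ : 0 ≤ s := (Real.rpow_pos_of_pos two_pos _).le.trans hs
  have hθ : 1 ≤ 2 ^ q * s := by
    rwa [Real.rpow_neg zero_le_two, inv_le_iff_one_le_mul₀' (by positivity)] at hs
  obtain ⟨k, hk₁, hk₂⟩ := exists_nat_pow_near ((one_le_div ht₁).2 ht) one_lt_two
  calc ENNReal.ofReal (s * t₁ ^ q) * μ (Ioi t₁)
      ≤ ENNReal.ofReal (s * t₁ ^ q) * μ (Ioi t₁) * ENNReal.ofReal ((2 ^ q * s) ^ k) :=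
        le_mul_of_one_le_right' (ENNReal.one_le_ofReal.2 (one_le_pow₀ hθ))
    _ = ENNReal.ofReal ((2 ^ k * t₁) ^ q) * (ENNReal.ofReal s ^ (k + 1) * μ (Ioi t₁)) := by
        rw [Real.mul_rpow (by positivity) ht₁.le, ← Real.rpow_pow_comm zero_le_two,
          ← ENNReal.ofReal_pow hs₀, mul_right_comm, ← ENNReal.ofReal_mul (by positivity),
          ← mul_assoc, ← ENNReal.ofReal_mul (by positivity)]
        congr 2
        ring
    _ ≤ ENNReal.ofReal (t ^ q) * μ (Ioi (2 ^ (k + 1) * t₁)) := by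
        gcongr
        · exact (le_div_iff₀ ht₁).1 hk₁
        · exact pow_mul_le_apply_two_pow_mul (φ := fun v => μ (Ioi v)) ht₁.le hgrowth (k + 1)
    _ ≤ ENNReal.ofReal (t ^ q) * μ (Ioi t) := by
        gcongr
        exact ((div_lt_iff₀ ht₁).1 hk₂).le

lemma exists_setLIntegral_Ioi_rpow_le {μ : Measure ℝ} {p r : ℝ} (hp : 0 ≤ p) (hr₀ : 0 ≤ r)
    (hr : r < 2 ^ (-p))
    (hdecay : ∀ᶠ v in atTop, μ (Ioi (2 * v)) ≤ ENNReal.ofReal r * μ (Ioi v)) :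
    ∃ C, 0 ≤ C ∧ ∀ᶠ t in atTop,
      ∫⁻ x in Ioi t, ENNReal.ofReal (x ^ p) ∂μ ≤ ENNReal.ofReal (C * t ^ p) * μ (Ioi t) := by
  obtain ⟨t₀, ht₀⟩ := eventually_atTop.1 hdecay
  have hθ := rpow_mul_lt_one_of_lt_rpow_neg two_pos hr
  refine ⟨2 ^ p * (1 - 2 ^ p * r)⁻¹, by have := sub_pos.2 hθ; positivity, ?_⟩
  filter_upwards [eventually_ge_atTop t₀, eventually_gt_atTop 0] with t ht ht₀'
  exact setLIntegral_Ioi_rpow_le_of_decay hp hr₀ hr ht₀' fun v hv => ht₀ v (ht.trans hv)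

lemma setLIntegral_Ioc_zero_rpow_le_mul_of_ofReal_le {μ : Measure ℝ} [IsFiniteMeasure μ]
    {q b c₀ : ℝ} {Y : ℝ≥0∞} (hq : 0 ≤ q) (hb : 0 ≤ b) (hc₀ : 0 < c₀)
    (hY : ENNReal.ofReal c₀ ≤ Y) :
    ∫⁻ x in Ioc 0 b, ENNReal.ofReal (x ^ q) ∂μ ≤ ENNReal.ofReal (b ^ q * μ.real univ / c₀) * Y :=
  calc ∫⁻ x in Ioc 0 b, ENNReal.ofReal (x ^ q) ∂μ ≤ ENNReal.ofReal (b ^ q) * μ univ :=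
        (setLIntegral_Ioc_rpow_le μ le_rfl hq).trans (by gcongr; exact subset_univ _)
    _ = ENNReal.ofReal (b ^ q * μ.real univ / c₀) * ENNReal.ofReal c₀ := by
        rw [← ENNReal.ofReal_mul (by positivity), div_mul_cancel₀ _ hc₀.ne',
          ENNReal.ofReal_mul (by positivity), ofReal_measureReal]
    _ ≤ ENNReal.ofReal (b ^ q * μ.real univ / c₀) * Y := by gcongr

lemma exists_setLIntegral_Ioc_zero_rpow_le {μ : Measure ℝ} [IsFiniteMeasure μ] {q s : ℝ}
    (hq : 0 ≤ q) (hs : 2 ^ (-q) < s) (hpos : ∀ v, μ (Ioi v) ≠ 0)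
    (hgrowth : ∀ᶠ v in atTop, ENNReal.ofReal s * μ (Ioi v) ≤ μ (Ioi (2 * v))) :
    ∃ C, 0 ≤ C ∧ ∀ᶠ t in atTop,
      ∫⁻ x in Ioc 0 t, ENNReal.ofReal (x ^ q) ∂μ ≤ ENNReal.ofReal (C * t ^ q) * μ (Ioi t) := by
  obtain ⟨t₀, ht₀⟩ := eventually_atTop.1 hgrowth
  set t₁ := max t₀ 1
  have ht₁ : 0 < t₁ := zero_lt_one.trans_le (le_max_right _ _)
  have hgrowth₁ (v : ℝ) (hv : t₁ ≤ v) := ht₀ v ((le_max_left _ _).trans hv)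
  have hs₀ : 0 < s := (Real.rpow_pos_of_pos two_pos _).trans hs
  have hθ := inv_lt_one_of_one_lt₀ (one_lt_rpow_mul_of_rpow_neg_lt two_pos hs)
  -- `c₀` bounds `t ^ q * μ (Ioi t)` below for `t ≥ t₁`; this absorbs the integral over `(0, 2 t₁]`
  set c₀ := s * t₁ ^ q * (μ (Ioi t₁)).toReal
  have hc₀ : 0 < c₀ := by
    have := ENNReal.toReal_pos (hpos t₁) (measure_ne_top μ _)
    positivity
  set M := (2 * t₁) ^ q * μ.real univ
  refine ⟨M / c₀ + s⁻¹ * (1 - (2 ^ q * s)⁻¹)⁻¹,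
    by have := sub_pos.2 hθ; positivity, ?_⟩
  filter_upwards [eventually_ge_atTop (2 * t₁)] with t ht
  have hlow : ENNReal.ofReal c₀ ≤ ENNReal.ofReal (t ^ q) * μ (Ioi t) := by
    rw [ENNReal.ofReal_mul (by positivity), ENNReal.ofReal_toReal (measure_ne_top μ _)]
    exact ofReal_mul_measure_Ioi_le_of_growth hq hs.le ht₁ (by linarith) hgrowth₁
  have hbottom := setLIntegral_Ioc_zero_rpow_le_mul_of_ofReal_le (μ := μ) hq
    (show 0 ≤ 2 * t₁ by positivity) hc₀ hlow
  calc ∫⁻ x in Ioc 0 t, ENNReal.ofReal (x ^ q) ∂μ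
      ≤ ∫⁻ x in Ioc 0 (2 * t₁), ENNReal.ofReal (x ^ q) ∂μ
        + ∫⁻ x in Ioc (2 * t₁) t, ENNReal.ofReal (x ^ q) ∂μ :=
        (lintegral_mono_set Ioc_subset_Ioc_union_Ioc).trans (lintegral_union_le _ _ _)
    _ ≤ ENNReal.ofReal (M / c₀) * (ENNReal.ofReal (t ^ q) * μ (Ioi t))
        + ENNReal.ofReal (s⁻¹ * (1 - (2 ^ q * s)⁻¹)⁻¹ * t ^ q) * μ (Ioi t) :=
        add_le_add hbottom (setLIntegral_Ioc_two_mul_rpow_le_of_growth hq hs ht₁ hgrowth₁)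
    _ = ENNReal.ofReal ((M / c₀ + s⁻¹ * (1 - (2 ^ q * s)⁻¹)⁻¹) * t ^ q) * μ (Ioi t) := by
        have := sub_pos.2 hθ
        have : 0 ≤ t ^ q := Real.rpow_nonneg (by linarith) q
        rw [← mul_assoc, ← ENNReal.ofReal_mul (by positivity), ← add_mul,
          ← ENNReal.ofReal_add (by positivity) (by positivity)]
        ring_nf

lemma eventually_measure_Ioi_mul_le {μ : Measure ℝ} [IsFiniteMeasure μ] {a L r : ℝ}
    (hpos : ∀ v, μ (Ioi v) ≠ 0)
    (hlim : Tendsto (fun v => (μ (Ioi (a * v))).toReal / (μ (Ioi v)).toReal) atTop (𝓝 L))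
    (hr : L < r) :
    ∀ᶠ v in atTop, μ (Ioi (a * v)) ≤ ENNReal.ofReal r * μ (Ioi v) := by
  filter_upwards [hlim.eventually (gt_mem_nhds hr)] with v hv
  rw [div_lt_iff₀ (ENNReal.toReal_pos (hpos v) (measure_ne_top μ _))] at hv
  rw [← ofReal_measureReal, ← ofReal_measureReal, ← ENNReal.ofReal_mul' measureReal_nonneg]
  exact ENNReal.ofReal_le_ofReal hv.le

lemma eventually_le_measure_Ioi_mul {μ : Measure ℝ} [IsFiniteMeasure μ] {a L r : ℝ}
    (hpos : ∀ v, μ (Ioi v) ≠ 0)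
    (hlim : Tendsto (fun v => (μ (Ioi (a * v))).toReal / (μ (Ioi v)).toReal) atTop (𝓝 L))
    (hr : r < L) :
    ∀ᶠ v in atTop, ENNReal.ofReal r * μ (Ioi v) ≤ μ (Ioi (a * v)) := by
  filter_upwards [hlim.eventually (lt_mem_nhds hr)] with v hv
  rw [lt_div_iff₀ (ENNReal.toReal_pos (hpos v) (measure_ne_top μ _))] at hv
  rw [← ofReal_measureReal, ← ofReal_measureReal, ← ENNReal.ofReal_mul' measureReal_nonneg]
  exact ENNReal.ofReal_le_ofReal hv.le

lemma setLIntegral_Ioi_zero_le_of_le_rpow {μ : Measure ℝ} {h : ℝ → ℝ≥0∞}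
    {t A B p q Cp Cq : ℝ} (ht : 0 ≤ t) (hA : 0 ≤ A) (hB : 0 ≤ B) (hCq : 0 ≤ Cq) (hCp : 0 ≤ Cp)
    (hsmall : ∀ x ∈ Ioc 0 t, h x ≤ ENNReal.ofReal (A * x ^ q))
    (hlarge : ∀ x ∈ Ioi t, h x ≤ ENNReal.ofReal (B * x ^ p))
    (hmq : ∫⁻ x in Ioc 0 t, ENNReal.ofReal (x ^ q) ∂μ ≤ ENNReal.ofReal (Cq * t ^ q) * μ (Ioi t))
    (hmp : ∫⁻ x in Ioi t, ENNReal.ofReal (x ^ p) ∂μ ≤ ENNReal.ofReal (Cp * t ^ p) * μ (Ioi t)) :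
    ∫⁻ x in Ioi 0, h x ∂μ ≤ ENNReal.ofReal (A * Cq * t ^ q + B * Cp * t ^ p) * μ (Ioi t) := by
  have htq : 0 ≤ t ^ q := Real.rpow_nonneg ht q
  have htp : 0 ≤ t ^ p := Real.rpow_nonneg ht p
  rw [← Ioc_union_Ioi_eq_Ioi ht]
  calc ∫⁻ x in Ioc 0 t ∪ Ioi t, h x ∂μ ≤ ∫⁻ x in Ioc 0 t, h x ∂μ + ∫⁻ x in Ioi t, h x ∂μ :=
        lintegral_union_le _ _ _
    _ ≤ ENNReal.ofReal A * ∫⁻ x in Ioc 0 t, ENNReal.ofReal (x ^ q) ∂μ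
        + ENNReal.ofReal B * ∫⁻ x in Ioi t, ENNReal.ofReal (x ^ p) ∂μ := by
        rw [← lintegral_const_mul' _ _ ENNReal.ofReal_ne_top,
          ← lintegral_const_mul' _ _ ENNReal.ofReal_ne_top]
        exact add_le_add
          (setLIntegral_mono' measurableSet_Ioc fun x hx =>
            (hsmall x hx).trans_eq (ENNReal.ofReal_mul hA))
          (setLIntegral_mono' measurableSet_Ioi fun x hx =>
            (hlarge x hx).trans_eq (ENNReal.ofReal_mul hB))
    _ ≤ ENNReal.ofReal A * (ENNReal.ofReal (Cq * t ^ q) * μ (Ioi t))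
        + ENNReal.ofReal B * (ENNReal.ofReal (Cp * t ^ p) * μ (Ioi t)) := by gcongr
    _ = ENNReal.ofReal (A * Cq * t ^ q + B * Cp * t ^ p) * μ (Ioi t) := by
        rw [← mul_assoc, ← mul_assoc, ← ENNReal.ofReal_mul hA, ← ENNReal.ofReal_mul hB, ← add_mul,
          ← ENNReal.ofReal_add (by positivity) (by positivity), mul_assoc, mul_assoc]

lemma tendsto_nhds_zero_of_forall_eventually_abs_le {ι : Type*} {l : Filter ι} {u : ι → ℝ}
    {D E : ℝ → ℝ} (hE : Tendsto E atTop (𝓝 0))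
    (h : ∀ a > 0, ∀ ε > 0, ∀ᶠ i in l, |u i| ≤ ε * D a + E a) : Tendsto u l (𝓝 0) := by
  rw [Metric.tendsto_nhds]
  intro δ hδ
  obtain ⟨a, hEa, ha⟩ :=
    ((hE.eventually (gt_mem_nhds (half_pos hδ))).and (eventually_gt_atTop 0)).exists
  filter_upwards [h a ha (δ / 2 / (|D a| + 1)) (by positivity)] with i hi
  have hDa : δ / 2 / (|D a| + 1) * D a < δ / 2 := by
    calc δ / 2 / (|D a| + 1) * D a ≤ δ / 2 / (|D a| + 1) * |D a| :=
          mul_le_mul_of_nonneg_left (le_abs_self _) (by positivity)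
      _ < δ / 2 / (|D a| + 1) * (|D a| + 1) := by gcongr; linarith
      _ = δ / 2 := div_mul_cancel₀ _ (by positivity)
  rw [Real.dist_eq, sub_zero]
  linarith

lemma enorm_setIntegral_Ioi_zero_map_const_mul_le {μ : Measure ℝ} {g : ℝ → ℝ}
    (hg : Measurable g) {ρ : ℝ} (hρ : 0 < ρ) :
    ‖∫ v in Ioi 0, g v ∂μ.map (ρ * ·)‖ₑ ≤ ∫⁻ x in Ioi 0, ‖g (ρ * x)‖ₑ ∂μ := by
  refine (enorm_integral_le_lintegral_enorm _).trans_eq ?_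
  rw [setLIntegral_map measurableSet_Ioi hg.enorm (measurable_const_mul ρ),
    preimage_const_mul_Ioi₀ 0 hρ, zero_div]

lemma enorm_le_ofReal_div_mul_rpow {y K C ρ x q : ℝ} (hK : 0 < K) (hρ : 0 ≤ ρ) (hx : 0 ≤ x)
    (h : K * |y| ≤ C * (ρ * x) ^ q) : ‖y‖ₑ ≤ ENNReal.ofReal (C * ρ ^ q / K * x ^ q) := by
  rw [Real.enorm_eq_ofReal_abs]
  refine ENNReal.ofReal_le_ofReal ?_
  rw [div_mul_eq_mul_div, le_div_iff₀ hK, mul_assoc, ← Real.mul_rpow hρ hx]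
  linarith

lemma abs_setIntegral_map_const_mul_le {μ : Measure ℝ} {g : ℝ → ℝ} (hg : Measurable g)
    {ρ a ε c p q Cp Cq R : ℝ} (hρ : 0 < ρ) (ha : 0 < a) (hε : 0 ≤ ε) (hc : 0 ≤ c)
    (hCq : 0 ≤ Cq) (hCp : 0 ≤ Cp) (hR : 0 ≤ R) (hK : μ (Ioi ρ⁻¹) ≠ 0) (hK' : μ (Ioi ρ⁻¹) ≠ ⊤)
    (hsmall : ∀ v, 0 < v → v ≤ a → v ^ (-q) * (μ (Ioi ρ⁻¹)).toReal * |g v| ≤ ε)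
    (hlarge : ∀ v > 0, (μ (Ioi ρ⁻¹)).toReal * |g v| ≤ c * v ^ p)
    (hmq : ∫⁻ x in Ioc 0 (a * ρ⁻¹), ENNReal.ofReal (x ^ q) ∂μ
      ≤ ENNReal.ofReal (Cq * (a * ρ⁻¹) ^ q) * μ (Ioi (a * ρ⁻¹)))
    (hmp : ∫⁻ x in Ioi (a * ρ⁻¹), ENNReal.ofReal (x ^ p) ∂μ
      ≤ ENNReal.ofReal (Cp * (a * ρ⁻¹) ^ p) * μ (Ioi (a * ρ⁻¹)))
    (hratio : μ (Ioi (a * ρ⁻¹)) ≤ ENNReal.ofReal R * μ (Ioi ρ⁻¹)) :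
    |∫ v in Ioi 0, g v ∂μ.map (ρ * ·)| ≤ (ε * Cq * a ^ q + c * Cp * a ^ p) * R := by
  set K := (μ (Ioi ρ⁻¹)).toReal
  have hK₀ : 0 < K := ENNReal.toReal_pos hK hK'
  set t := a * ρ⁻¹
  have ht : 0 < t := by positivity
  have hρt : ρ * t = a := by simp only [t]; field_simp
  set X := ε * Cq * a ^ q + c * Cp * a ^ p
  have hsmall' (x : ℝ) (hx : x ∈ Ioc 0 t) :
      ‖g (ρ * x)‖ₑ ≤ ENNReal.ofReal (ε * ρ ^ q / K * x ^ q) := by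
    have hv : 0 < ρ * x := mul_pos hρ hx.1
    have h := hsmall (ρ * x) hv (hρt ▸ mul_le_mul_of_nonneg_left hx.2 hρ.le)
    rw [Real.rpow_neg hv.le, mul_assoc, inv_mul_le_iff₀ (by positivity),
      mul_comm ((ρ * x) ^ q)] at h
    exact enorm_le_ofReal_div_mul_rpow hK₀ hρ.le hx.1.le h
  have hlarge' (x : ℝ) (hx : x ∈ Ioi t) :
      ‖g (ρ * x)‖ₑ ≤ ENNReal.ofReal (c * ρ ^ p / K * x ^ p) :=
    enorm_le_ofReal_div_mul_rpow hK₀ hρ.le (ht.trans hx).le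
      (hlarge (ρ * x) (mul_pos hρ (ht.trans hx)))
  have hbound : ∫⁻ x in Ioi 0, ‖g (ρ * x)‖ₑ ∂μ ≤ ENNReal.ofReal (X / K) * μ (Ioi t) := by
    convert setLIntegral_Ioi_zero_le_of_le_rpow ht.le (by positivity) (by positivity) hCq hCp
      hsmall' hlarge' hmq hmp using 3
    simp only [X]
    rw [← hρt, Real.mul_rpow hρ.le ht.le, Real.mul_rpow hρ.le ht.le]
    ring
  have henorm : ‖∫ v in Ioi 0, g v ∂μ.map (ρ * ·)‖ₑ ≤ ENNReal.ofReal (X * R) :=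
    calc ‖∫ v in Ioi 0, g v ∂μ.map (ρ * ·)‖ₑ ≤ ∫⁻ x in Ioi 0, ‖g (ρ * x)‖ₑ ∂μ :=
          enorm_setIntegral_Ioi_zero_map_const_mul_le hg hρ
      _ ≤ ENNReal.ofReal (X / K) * (ENNReal.ofReal R * μ (Ioi ρ⁻¹)) := by
          grw [hbound, hratio]
      _ = ENNReal.ofReal (X * R) := by
          rw [← ENNReal.ofReal_toReal hK', ← ENNReal.ofReal_mul hR,
            ← ENNReal.ofReal_mul (by positivity)]
          rw [mul_comm R, ← mul_assoc, div_mul_cancel₀ _ hK₀.ne']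
  rw [← Real.norm_eq_abs, ← ENNReal.ofReal_le_ofReal_iff (by positivity), ofReal_norm]
  exact henorm

lemma tendsto_rpow_mul_rpow_neg_atTop {p γ : ℝ} (hpγ : p < γ) :
    Tendsto (fun a : ℝ => a ^ p * a ^ (-γ)) atTop (𝓝 0) := by
  refine (tendsto_rpow_neg_atTop (sub_pos.2 hpγ)).congr' ?_
  filter_upwards [eventually_gt_atTop 0] with a ha
  rw [← Real.rpow_add ha, neg_sub, sub_eq_add_neg]

theorem regvar_family_limit_largepow_general
    (γ : ℝ)
    (μ : Measure ℝ) [IsProbabilityMeasure μ]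
    (hpos : ∀ v : ℝ, 0 < μ (Set.Ioi v))
    (hreg : ∀ a > (0:ℝ), Tendsto
      (fun v : ℝ => (μ (Set.Ioi (a * v))).toReal / (μ (Set.Ioi v)).toReal)
      atTop (𝓝 (a ^ (-γ))))
    (f : ℝ → ℝ → ℝ) (hmeas : ∀ ρ > (0:ℝ), Measurable (f ρ))
    (p q c : ℝ) (hp : 0 < p) (hpγ : p < γ) (hγq : γ < q) (hc : 0 < c)
    (hsup : ∀ a > (0:ℝ), ∀ ε > (0:ℝ), ∀ᶠ ρ in 𝓝[>] (0:ℝ),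
      ∀ v, 0 < v → v ≤ a → v ^ (-q) * (μ (Set.Ioi ρ⁻¹)).toReal * |f ρ v| ≤ ε)
    (hbound : ∀ ρ > (0:ℝ), ∀ v > (0:ℝ),
      (μ (Set.Ioi ρ⁻¹)).toReal * |f ρ v| ≤ c * v ^ p) :
    Tendsto
      (fun ρ : ℝ => ∫ v in Set.Ioi (0:ℝ), f ρ v ∂(Measure.map (fun x => ρ * x) μ))
      (𝓝[>] (0:ℝ)) (𝓝 0) := by
  have hpos' (v : ℝ) : μ (Ioi v) ≠ 0 := (hpos v).ne'
  obtain ⟨r, hγr, hrp⟩ : ∃ r, (2 : ℝ) ^ (-γ) < r ∧ r < 2 ^ (-p) :=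
    exists_between (Real.rpow_lt_rpow_of_exponent_lt one_lt_two (neg_lt_neg hpγ))
  obtain ⟨s, hqs, hsγ⟩ : ∃ s, (2 : ℝ) ^ (-q) < s ∧ s < 2 ^ (-γ) :=
    exists_between (Real.rpow_lt_rpow_of_exponent_lt one_lt_two (neg_lt_neg hγq))
  obtain ⟨Cp, hCp, hmp⟩ := exists_setLIntegral_Ioi_rpow_le hp.le
    ((Real.rpow_pos_of_pos two_pos _).le.trans hγr.le) hrp
    (eventually_measure_Ioi_mul_le hpos' (hreg 2 two_pos) hγr)
  obtain ⟨Cq, hCq, hmq⟩ := exists_setLIntegral_Ioc_zero_rpow_le (by linarith) hqs hpos'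
    (eventually_le_measure_Ioi_mul hpos' (hreg 2 two_pos) hsγ)
  refine tendsto_nhds_zero_of_forall_eventually_abs_le
    (D := fun a => 2 * Cq * (a ^ q * a ^ (-γ))) (E := fun a => 2 * c * Cp * (a ^ p * a ^ (-γ)))
    (by simpa using (tendsto_rpow_mul_rpow_neg_atTop hpγ).const_mul (2 * c * Cp))
    fun a ha ε hε => ?_
  have ht : Tendsto (fun ρ : ℝ => a * ρ⁻¹) (𝓝[>] 0) atTop :=
    tendsto_inv_nhdsGT_zero.const_mul_atTop ha
  have hratio := eventually_measure_Ioi_mul_le hpos' (hreg a ha)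
    (lt_two_mul_self (Real.rpow_pos_of_pos ha (-γ)))
  filter_upwards [hsup a ha ε hε, ht.eventually hmq, ht.eventually hmp,
    tendsto_inv_nhdsGT_zero.eventually hratio, self_mem_nhdsWithin]
    with ρ hsmall hmqρ hmpρ hratioρ (hρ : 0 < ρ)
  refine (abs_setIntegral_map_const_mul_le (hmeas ρ hρ) hρ ha hε.le hc.le hCq hCp
    (by positivity) (hpos' _) (measure_ne_top _ _) hsmall (hbound ρ hρ) hmqρ hmpρ
    hratioρ).trans_eq ?_
  ring

theorem regvar_family_limit_largepow
    (γ : ℝ) (hγ : 0 < γ)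
    (μ : Measure ℝ) [IsProbabilityMeasure μ]
    (hsupp : μ (Set.Iio 0) = 0)
    (hpos : ∀ v : ℝ, 0 < μ (Set.Ioi v))
    (hreg : ∀ a > (0:ℝ), Tendsto
      (fun v : ℝ => (μ (Set.Ioi (a * v))).toReal / (μ (Set.Ioi v)).toReal)
      atTop (𝓝 (a ^ (-γ))))
    (f : ℝ → ℝ → ℝ) (hmeas : ∀ ρ > (0:ℝ), Measurable (f ρ))
    (p q c : ℝ) (hp : 0 < p) (hpγ : p < γ) (hγq : γ < q) (hc : 0 < c)
    (hsup : ∀ a > (0:ℝ), ∀ ε > (0:ℝ), ∀ᶠ ρ in 𝓝[>] (0:ℝ),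
      ∀ v, 0 < v → v ≤ a → v ^ (-q) * (μ (Set.Ioi ρ⁻¹)).toReal * |f ρ v| ≤ ε)
    (hbound : ∀ ρ > (0:ℝ), ∀ v > (0:ℝ),
      (μ (Set.Ioi ρ⁻¹)).toReal * |f ρ v| ≤ c * v ^ p) :
    Tendsto
      (fun ρ : ℝ => ∫ v in Set.Ioi (0:ℝ), f ρ v ∂(Measure.map (fun x => ρ * x) μ))
      (𝓝[>] (0:ℝ)) (𝓝 0) :=
  regvar_family_limit_largepow_general γ μ hpos hreg f hmeas p q c hp hpγ hγq hc hsup hbound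
end

section
/- Let C be a bounded measurable subset of ℝᵈ whose topological boundary ∂C has Lebesgue measure zero, and let φ be a finite signed measure on ℝᵈ. Then the complex-valued function v ↦ ∫_{ℝᵈ} Ψ(φ(x + v^{1/d}C)) dx is continuous on (0,∞). -/
open MeasureTheory Filter Topology Pointwise

noncomputable def Psi (v : ℝ) : ℂ := Complex.exp (v * Complex.I) - 1 - v * Complex.I

/-!
Dominated convergence in the scale `s = v ^ (1 / d)`, which depends continuously on `v > 0`.
Since `‖Ψ t‖ ≤ 2 |t|`, for `s` near `s₀` the integrand is dominated by `2 |φ| (x + B)`, where `B`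
is a ball containing every `s • C`; by Fubini, `∫ |φ| (x + B) dx = |φ| (univ) * vol B < ∞`.
By Fubini again, for almost every `x` the set `x + s₀ • ∂C` is `|φ|`-null, and off that set
membership in `x + s • C` stabilises as `s → s₀`, so `φ (x + s • C) → φ (x + s₀ • C)`.
-/

open Set Metric

theorem norm_Psi_le (t : ℝ) : ‖Psi t‖ ≤ 2 * |t| := by
  have h : ‖Complex.exp (t * Complex.I) - 1‖ ≤ |t| := by
    simpa [mul_comm] using Real.norm_exp_I_mul_ofReal_sub_one_le (x := t)
  calc ‖Psi t‖ ≤ ‖Complex.exp (t * Complex.I) - 1‖ + ‖(t : ℂ) * Complex.I‖ := norm_sub_le _ _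
    _ ≤ 2 * |t| := by
      simp only [norm_mul, Complex.norm_I, Complex.norm_real, Real.norm_eq_abs]
      linarith

theorem continuous_Psi : Continuous Psi := by
  unfold Psi
  fun_prop

theorem Filter.Tendsto.eventually_mem_iff_of_notMem_frontier {α X : Type*} [TopologicalSpace X]
    {l : Filter α} {g : α → X} {a : X} {C : Set X} (hg : Tendsto g l (𝓝 a))
    (ha : a ∉ frontier C) : ∀ᶠ i in l, g i ∈ C ↔ a ∈ C := by
  rw [← mem_compl_iff, compl_frontier_eq_union_interior] at ha
  rcases ha with ha | ha
  · filter_upwards [hg.eventually (isOpen_interior.mem_nhds ha)] with i hi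
    exact iff_of_true (interior_subset hi) (interior_subset ha)
  · filter_upwards [hg.eventually (isOpen_interior.mem_nhds ha)] with i hi
    exact iff_of_false (interior_subset hi) (interior_subset ha)

theorem Bornology.IsBounded.exists_smul_subset_closedBall {𝕜 E : Type*} [NormedField 𝕜]
    [SeminormedAddCommGroup E] [NormedSpace 𝕜 E] {C : Set E} (hC : Bornology.IsBounded C)
    {r : ℝ} (hr : 0 ≤ r) : ∃ R, ∀ s : 𝕜, ‖s‖ ≤ r → s • C ⊆ closedBall (0 : E) R := by
  obtain ⟨M, hM⟩ := hC.exists_norm_le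
  refine ⟨r * M, fun s hs ↦ ?_⟩
  rintro _ ⟨c, hc, rfl⟩
  rw [mem_closedBall_zero_iff, norm_smul]
  exact mul_le_mul hs (hM c hc) (norm_nonneg _) hr

namespace MeasureTheory

section Translate

variable {G : Type*} [AddCommGroup G]

theorem vadd_set_eq_prodMk_preimage (x : G) (S : Set G) :
    (x +ᵥ S : Set G) = Prod.mk x ⁻¹' {p : G × G | p.2 - p.1 ∈ S} := by
  ext y
  simp [mem_vadd_set_iff_neg_vadd_mem, sub_eq_neg_add]

variable [MeasurableSpace G] [MeasurableAdd₂ G] [MeasurableNeg G] {S : Set G}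

theorem measurable_measure_vadd (μ : Measure G) [SFinite μ] (hS : MeasurableSet S) :
    Measurable fun x : G ↦ μ (x +ᵥ S) := by
  simp_rw [vadd_set_eq_prodMk_preimage]
  exact measurable_measure_prodMk_left ((measurable_snd.sub measurable_fst) hS)

theorem lintegral_measure_vadd (μ ν : Measure G) [SFinite μ] [SFinite ν]
    [ν.IsAddLeftInvariant] [ν.IsNegInvariant] (hS : MeasurableSet S) :
    ∫⁻ x : G, μ (x +ᵥ S) ∂ν = μ univ * ν S := by
  have hT : MeasurableSet {p : G × G | p.2 - p.1 ∈ S} := (measurable_snd.sub measurable_fst) hS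
  simp_rw [vadd_set_eq_prodMk_preimage, ← Measure.prod_apply hT, Measure.prod_apply_symm hT]
  have h (y : G) : ν ((fun x ↦ (x, y)) ⁻¹' {p : G × G | p.2 - p.1 ∈ S}) = ν S :=
    (Measure.measurePreserving_sub_left ν y).measure_preimage hS.nullMeasurableSet
  simp_rw [h, lintegral_const, mul_comm]

theorem integrable_measureReal_vadd (μ ν : Measure G) [IsFiniteMeasure μ] [SFinite ν]
    [ν.IsAddLeftInvariant] [ν.IsNegInvariant] (hS : MeasurableSet S) (hνS : ν S ≠ ⊤) :
    Integrable (fun x : G ↦ μ.real (x +ᵥ S)) ν := by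
  refine integrable_toReal_of_lintegral_ne_top (measurable_measure_vadd μ hS).aemeasurable ?_
  rw [lintegral_measure_vadd μ ν hS]
  exact ENNReal.mul_ne_top (measure_ne_top μ _) hνS

theorem ae_measure_vadd_eq_zero (μ ν : Measure G) [SFinite μ] [SFinite ν]
    [ν.IsAddLeftInvariant] [ν.IsNegInvariant] (hS : MeasurableSet S) (hνS : ν S = 0) :
    ∀ᵐ x ∂ν, μ (x +ᵥ S) = 0 := by
  refine (lintegral_eq_zero_iff (measurable_measure_vadd μ hS)).1 ?_
  rw [lintegral_measure_vadd μ ν hS, hνS, mul_zero]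

theorem SignedMeasure.measurable_vadd (φ : SignedMeasure G) (hS : MeasurableSet S) :
    Measurable fun x : G ↦ φ (x +ᵥ S) := by
  have h (x : G) := φ.apply_eq_posPart_real_sub_negPart_real (hS.const_vadd x)
  simp_rw [h]
  exact (measurable_measure_vadd _ hS).ennreal_toReal.sub
    (measurable_measure_vadd _ hS).ennreal_toReal

end Translate

theorem SignedMeasure.tendsto_apply_of_ae_eventually_mem_iff {α ι : Type*} [MeasurableSpace α]
    (φ : SignedMeasure α) {L : Filter ι} [L.IsCountablyGenerated] {A : Set α} {As : ι → Set α}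
    (hA : MeasurableSet A) (hAs : ∀ i, MeasurableSet (As i))
    (h_lim : ∀ᵐ x ∂φ.totalVariation, ∀ᶠ i in L, x ∈ As i ↔ x ∈ A) :
    Tendsto (fun i ↦ φ (As i)) L (𝓝 (φ A)) := by
  have h (μ : Measure α) [IsFiniteMeasure μ] (hμ : μ ≤ φ.totalVariation) :
      Tendsto (fun i ↦ μ.real (As i)) L (𝓝 (μ.real A)) :=
    (ENNReal.tendsto_toReal (measure_ne_top μ A)).comp
      (tendsto_measure_of_ae_tendsto_indicator_of_isFiniteMeasure L hA hAs (ae_mono hμ h_lim))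
  simp_rw [φ.apply_eq_posPart_real_sub_negPart_real (hAs _),
    φ.apply_eq_posPart_real_sub_negPart_real hA]
  exact (h _ (Measure.le_add_right le_rfl)).sub (h _ (Measure.le_add_left le_rfl))

variable {E : Type*} [NormedAddCommGroup E] [NormedSpace ℝ E] [MeasurableSpace E] [BorelSpace E]

theorem SignedMeasure.tendsto_vadd_smul_set (φ : SignedMeasure E) {C : Set E}
    (hC : MeasurableSet C) {s₀ : ℝ} (hs₀ : s₀ ≠ 0) {x : E}
    (hx : φ.totalVariation (x +ᵥ s₀ • frontier C) = 0) :
    Tendsto (fun s : ℝ ↦ φ (x +ᵥ s • C)) (𝓝 s₀) (𝓝 (φ (x +ᵥ s₀ • C))) := by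
  refine φ.tendsto_apply_of_ae_eventually_mem_iff ((hC.const_smul₀ s₀).const_vadd x)
    (fun s ↦ (hC.const_smul₀ s).const_vadd x) ?_
  filter_upwards [measure_eq_zero_iff_ae_notMem.1 hx] with y hy
  simp_rw [mem_vadd_set_iff_neg_vadd_mem, mem_smul_set_iff_inv_smul_mem₀ hs₀] at hy
  have hinv : Tendsto (fun s : ℝ ↦ s⁻¹ • (-x +ᵥ y)) (𝓝 s₀) (𝓝 (s₀⁻¹ • (-x +ᵥ y))) :=
    ((continuousAt_inv₀ hs₀).smul continuousAt_const).tendsto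
  filter_upwards [hinv.eventually_mem_iff_of_notMem_frontier hy,
    eventually_ne_nhds hs₀] with s hs hs0
  simp_rw [mem_vadd_set_iff_neg_vadd_mem, mem_smul_set_iff_inv_smul_mem₀ hs0,
    mem_smul_set_iff_inv_smul_mem₀ hs₀, hs]

variable [FiniteDimensional ℝ E] (μ : Measure E) [μ.IsAddHaarMeasure]

theorem continuousAt_integral_signedMeasure_vadd_smul {H : Type*} [NormedAddCommGroup H]
    [NormedSpace ℝ H] {F : ℝ → H} (hF : Continuous F) {K : ℝ} (hFK : ∀ t, ‖F t‖ ≤ K * |t|)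
    {C : Set E} (hCm : MeasurableSet C) (hCb : Bornology.IsBounded C)
    (hCfr : μ (frontier C) = 0) (φ : SignedMeasure E) {s₀ : ℝ} (hs₀ : s₀ ≠ 0) :
    ContinuousAt (fun s : ℝ ↦ ∫ x, F (φ (x +ᵥ s • C)) ∂μ) s₀ := by
  have hK : 0 ≤ K := by simpa using (norm_nonneg _).trans (hFK 1)
  obtain ⟨R, hR⟩ := hCb.exists_smul_subset_closedBall (𝕜 := ℝ) (r := ‖s₀‖ + 1) (by positivity)
  have hbound : ∀ᶠ s in 𝓝 s₀, ∀ x : E, ‖F (φ (x +ᵥ s • C))‖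
      ≤ K * φ.totalVariation.real (x +ᵥ closedBall (0 : E) R) := by
    filter_upwards [closedBall_mem_nhds s₀ one_pos] with s hs x
    have hsub : x +ᵥ s • C ⊆ x +ᵥ closedBall (0 : E) R :=
      vadd_set_mono (hR s (norm_le_norm_add_const_of_dist_le hs))
    calc ‖F (φ (x +ᵥ s • C))‖ ≤ K * ‖φ (x +ᵥ s • C)‖ := hFK _
      _ ≤ K * φ.totalVariation.real (x +ᵥ s • C) :=
        mul_le_mul_of_nonneg_left (φ.norm_le_totalVariation _) hK
      _ ≤ K * φ.totalVariation.real (x +ᵥ closedBall (0 : E) R) :=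
        mul_le_mul_of_nonneg_left (measureReal_mono hsub) hK
  have hnull : μ (s₀ • frontier C) = 0 := by rw [Measure.addHaar_smul, hCfr, mul_zero]
  refine tendsto_integral_filter_of_dominated_convergence _
    (Eventually.of_forall fun s ↦
      hF.comp_aestronglyMeasurable (φ.measurable_vadd (hCm.const_smul₀ s)).aestronglyMeasurable)
    (hbound.mono fun _ h ↦ ae_of_all μ h)
    ((integrable_measureReal_vadd _ μ measurableSet_closedBall
      measure_closedBall_lt_top.ne).const_mul K) ?_
  filter_upwards [ae_measure_vadd_eq_zero φ.totalVariation μ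
    (isClosed_frontier.measurableSet.const_smul₀ s₀) hnull] with x hx
  exact (hF.tendsto _).comp (φ.tendsto_vadd_smul_set hCm hs₀ hx)

end MeasureTheory

theorem continuity_of_Psi_integral_general
    (d : ℕ)
    (C : Set (EuclideanSpace ℝ (Fin d)))
    (hCm : MeasurableSet C) (hCb : Bornology.IsBounded C)
    (hCfr : volume (frontier C) = 0)
    (φ : MeasureTheory.SignedMeasure (EuclideanSpace ℝ (Fin d))) :
    ContinuousOn
      (fun v : ℝ => ∫ x, Psi (φ (x +ᵥ (v ^ ((d:ℝ)⁻¹) • C)))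
        ∂(volume : Measure (EuclideanSpace ℝ (Fin d))))
      (Set.Ioi 0) := by
  intro v (hv : 0 < v)
  have hroot : ContinuousAt (fun v : ℝ ↦ v ^ (d : ℝ)⁻¹) v :=
    Real.continuousAt_rpow_const v _ (Or.inl hv.ne')
  exact ContinuousAt.comp_continuousWithinAt (f := fun v : ℝ ↦ v ^ (d : ℝ)⁻¹)
    (continuousAt_integral_signedMeasure_vadd_smul volume continuous_Psi norm_Psi_le hCm hCb
      hCfr φ (Real.rpow_pos_of_pos hv _).ne') hroot.continuousWithinAt

theorem continuity_of_Psi_integral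
    (d : ℕ) (hd : 0 < d)
    (C : Set (EuclideanSpace ℝ (Fin d)))
    (hCm : MeasurableSet C) (hCb : Bornology.IsBounded C)
    (hCfr : volume (frontier C) = 0)
    (φ : MeasureTheory.SignedMeasure (EuclideanSpace ℝ (Fin d))) :
    ContinuousOn
      (fun v : ℝ => ∫ x, Psi (φ (x +ᵥ (v ^ ((d:ℝ)⁻¹) • C)))
        ∂(volume : Measure (EuclideanSpace ℝ (Fin d))))
      (Set.Ioi 0) :=
  continuity_of_Psi_integral_general d C hCm hCb hCfr φ
end

section
/- Let C be a bounded measurable subset of ℝᵈ, γ ∈ (1,2), and a > 0 such that C ⊆ aB, where B is the open unit ball of ℝᵈ centered at the origin. Then K_{γ,aB}(e₁) < ∞ for a unit vector e₁ ∈ ℝᵈ, and K_{γ,C}(x) ≤ K_{γ,aB}(e₁) · |x|^{−(γ−1)d} for every x ≠ 0. Consequently, if φ is a finite signed measure on ℝᵈ with finite (2−γ)-Riesz energy, then ∫_{ℝᵈ}∫_{ℝᵈ} K_{γ,C}(x − y) d|φ|(x) d|φ|(y) < ∞. -/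
open MeasureTheory Filter Topology Pointwise
open scoped ENNReal NNReal

noncomputable def rieszKernel (d : ℕ) (γ : ℝ) (C : Set (EuclideanSpace ℝ (Fin d)))
    (x : EuclideanSpace ℝ (Fin d)) : ℝ≥0∞ :=
  ∫⁻ v in Set.Ioi (0:ℝ),
    volume (((v ^ (-(d:ℝ)⁻¹)) • x +ᵥ C) ∩ C) * ENNReal.ofReal (v ^ (-γ))

/-!
Substituting `v = r ^ d * w` shows that the kernel is homogeneous of degree `-(γ - 1) d`, and the
kernel of a ball is invariant under the reflection exchanging two vectors of equal norm; with
monotonicity in `C` this gives `K_{γ,C}(x) ≤ K_{γ,aB}(e₁) |x|^{-(γ-1)d}`. The constant is finite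
because `(v^{-1/d} e₁ + aB) ∩ aB = ∅` for `v ≤ (2a)^{-d}`, while `∫_{(2a)^{-d}}^∞ v^{-γ} dv < ∞`
for `γ > 1`. The energy bound is then a pointwise comparison of the integrands.
-/

open Set Metric

theorem lintegral_Ioi_zero_comp_mul_left (g : ℝ → ℝ≥0∞) {c : ℝ} (hc : 0 < c) :
    ∫⁻ w in Ioi 0, g (c * w) = ENNReal.ofReal c⁻¹ * ∫⁻ v in Ioi 0, g v := by
  have hmap : Measure.map (c * ·) (volume.restrict (Ioi (0:ℝ)))
      = ENNReal.ofReal c⁻¹ • volume.restrict (Ioi 0) := by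
    conv_lhs => rw [← zero_div c, ← preimage_const_mul_Ioi₀ 0 hc]
    rw [← Measure.restrict_map (measurable_const_mul c) measurableSet_Ioi,
      Real.map_volume_mul_left hc.ne', Measure.restrict_smul, abs_of_pos (inv_pos.mpr hc)]
  have hemb : MeasurableEmbedding (c * ·) := (Homeomorph.mulLeft₀ c hc.ne').measurableEmbedding
  rw [← hemb.lintegral_map, hmap, lintegral_smul_measure, smul_eq_mul]

section rieszKernel

variable {d : ℕ} {γ : ℝ}

theorem rieszKernel_mono {C D : Set (EuclideanSpace ℝ (Fin d))} (h : C ⊆ D)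
    (x : EuclideanSpace ℝ (Fin d)) : rieszKernel d γ C x ≤ rieszKernel d γ D x :=
  lintegral_mono fun _ ↦ by gcongr

theorem rieszKernel_smul (hd : d ≠ 0) (C : Set (EuclideanSpace ℝ (Fin d)))
    (x : EuclideanSpace ℝ (Fin d)) {r : ℝ} (hr : 0 < r) :
    rieszKernel d γ C (r • x) = ENNReal.ofReal (r ^ (-(γ - 1) * d)) * rieszKernel d γ C x := by
  have hrd : 0 < r ^ (d:ℝ) := Real.rpow_pos_of_pos hr _
  have hinteg : ∀ w ∈ Ioi (0:ℝ),
      volume ((((r ^ (d:ℝ) * w) ^ (-(d:ℝ)⁻¹)) • (r • x) +ᵥ C) ∩ C)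
          * ENNReal.ofReal ((r ^ (d:ℝ) * w) ^ (-γ))
        = ENNReal.ofReal (r ^ (-(d * γ)))
          * (volume (((w ^ (-(d:ℝ)⁻¹)) • x +ᵥ C) ∩ C) * ENNReal.ofReal (w ^ (-γ))) := by
    intro w (hw : 0 < w)
    have hshift : (r ^ (d:ℝ) * w) ^ (-(d:ℝ)⁻¹) * r = w ^ (-(d:ℝ)⁻¹) := by
      rw [Real.mul_rpow hrd.le hw.le, ← Real.rpow_mul hr.le, mul_neg,
        mul_inv_cancel₀ (Nat.cast_ne_zero.mpr hd), Real.rpow_neg_one, mul_right_comm,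
        inv_mul_cancel₀ hr.ne', one_mul]
    have hweight : (r ^ (d:ℝ) * w) ^ (-γ) = r ^ (-(d * γ)) * w ^ (-γ) := by
      rw [Real.mul_rpow hrd.le hw.le, ← Real.rpow_mul hr.le, mul_neg]
    rw [smul_smul, hshift, hweight, ENNReal.ofReal_mul (Real.rpow_nonneg hr.le _)]
    ring
  have hexp : (d:ℝ) + -(d * γ) = -(γ - 1) * d := by ring
  calc rieszKernel d γ C (r • x)
      = ENNReal.ofReal (r ^ (d:ℝ)) * ∫⁻ w in Ioi 0,
          volume ((((r ^ (d:ℝ) * w) ^ (-(d:ℝ)⁻¹)) • (r • x) +ᵥ C) ∩ C)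
            * ENNReal.ofReal ((r ^ (d:ℝ) * w) ^ (-γ)) := by
        rw [lintegral_Ioi_zero_comp_mul_left (fun v ↦ volume (((v ^ (-(d:ℝ)⁻¹)) • (r • x) +ᵥ C)
          ∩ C) * ENNReal.ofReal (v ^ (-γ))) hrd, ← mul_assoc, ← ENNReal.ofReal_mul hrd.le,
          mul_inv_cancel₀ hrd.ne', ENNReal.ofReal_one, one_mul, rieszKernel]
    _ = ENNReal.ofReal (r ^ (d:ℝ)) * (ENNReal.ofReal (r ^ (-(d * γ))) * rieszKernel d γ C x) := by
        rw [setLIntegral_congr_fun measurableSet_Ioi hinteg,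
          lintegral_const_mul' _ _ ENNReal.ofReal_ne_top, rieszKernel]
    _ = _ := by rw [← mul_assoc, ← ENNReal.ofReal_mul hrd.le, ← Real.rpow_add hr, hexp]

theorem rieszKernel_preimage_linearIsometryEquiv (f : EuclideanSpace ℝ (Fin d) ≃ₗᵢ[ℝ]
    EuclideanSpace ℝ (Fin d)) (C : Set (EuclideanSpace ℝ (Fin d)))
    (x : EuclideanSpace ℝ (Fin d)) :
    rieszKernel d γ (f ⁻¹' C) x = rieszKernel d γ C (f x) := by
  refine lintegral_congr fun v ↦ ?_
  have hset : ∀ y : EuclideanSpace ℝ (Fin d), (y +ᵥ f ⁻¹' C) ∩ f ⁻¹' C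
      = f ⁻¹' ((f y +ᵥ C) ∩ C) := by
    intro y
    ext z
    simp [mem_vadd_set_iff_neg_vadd_mem]
  rw [hset, f.measurePreserving.measure_preimage_emb f.toHomeomorph.measurableEmbedding,
    map_smul]

theorem rieszKernel_ball_eq_of_norm_eq (a : ℝ) {x y : EuclideanSpace ℝ (Fin d)}
    (hxy : ‖x‖ = ‖y‖) : rieszKernel d γ (ball 0 a) x = rieszKernel d γ (ball 0 a) y := by
  set f := Submodule.reflection (ℝ ∙ (x - y))ᗮ
  have hball : f ⁻¹' ball 0 a = ball 0 a := by
    rw [LinearIsometryEquiv.preimage_ball, map_zero]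
  rw [← Submodule.reflection_sub hxy, ← rieszKernel_preimage_linearIsometryEquiv, hball]

theorem rieszKernel_le_ball_mul_norm_rpow (hd : d ≠ 0) {C : Set (EuclideanSpace ℝ (Fin d))}
    {a : ℝ} (hC : C ⊆ ball 0 a) {e : EuclideanSpace ℝ (Fin d)} (he : ‖e‖ = 1)
    {x : EuclideanSpace ℝ (Fin d)} (hx : x ≠ 0) :
    rieszKernel d γ C x ≤ rieszKernel d γ (ball 0 a) e * ENNReal.ofReal (‖x‖ ^ (-(γ - 1) * d)) :=
  calc rieszKernel d γ C x
      ≤ rieszKernel d γ (ball 0 a) (‖x‖ • (‖x‖⁻¹ • x)) := by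
        rw [smul_inv_smul₀ (norm_ne_zero_iff.mpr hx)]
        exact rieszKernel_mono hC x
    _ = _ := by
        have hunit : ‖‖x‖⁻¹ • x‖ = ‖e‖ := by
          rw [norm_smul, norm_inv, norm_norm, inv_mul_cancel₀ (norm_ne_zero_iff.mpr hx), he]
        rw [rieszKernel_smul hd _ _ (norm_pos_iff.mpr hx), mul_comm,
          rieszKernel_ball_eq_of_norm_eq a hunit]

theorem rieszKernel_ball_lt_top (hd : d ≠ 0) (hγ : 1 < γ) {a : ℝ} (ha : 0 < a)
    {e : EuclideanSpace ℝ (Fin d)} (he : ‖e‖ = 1) : rieszKernel d γ (ball 0 a) e < ⊤ := by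
  set T : ℝ := (2 * a) ^ (-(d:ℝ))
  have hT : 0 < T := Real.rpow_pos_of_pos (by positivity) _
  have hvanish : ∀ v ∈ Ioc 0 T,
      (v ^ (-(d:ℝ)⁻¹) • e +ᵥ ball (0 : EuclideanSpace ℝ (Fin d)) a) ∩ ball 0 a = ∅ := by
    rintro v ⟨hv, hvT⟩
    have hshift : 2 * a ≤ v ^ (-(d:ℝ)⁻¹) := by
      have := Real.rpow_le_rpow_of_nonpos (z := (-(d:ℝ))⁻¹) hv hvT
        (inv_nonpos.mpr (neg_nonpos.mpr (by positivity)))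
      rwa [Real.rpow_rpow_inv (by positivity) (by simpa using hd), inv_neg] at this
    rw [vadd_ball, vadd_eq_add, add_zero, ← disjoint_iff_inter_eq_empty]
    refine ball_disjoint_ball ?_
    rw [dist_zero_right, norm_smul, he, mul_one, Real.norm_of_nonneg (by positivity)]
    linarith
  have hle : ∀ v ∈ Ioi (0:ℝ),
      volume ((v ^ (-(d:ℝ)⁻¹) • e +ᵥ ball (0 : EuclideanSpace ℝ (Fin d)) a) ∩ ball 0 a)
          * ENNReal.ofReal (v ^ (-γ))
        ≤ (Ioi T).indicator (fun v ↦ volume (ball (0 : EuclideanSpace ℝ (Fin d)) a)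
            * ENNReal.ofReal (v ^ (-γ))) v := by
    intro v (hv : 0 < v)
    rcases le_or_gt v T with hvT | hvT
    · rw [hvanish v ⟨hv, hvT⟩, measure_empty, zero_mul]
      positivity
    · rw [indicator_of_mem (show v ∈ Ioi T from hvT)]
      gcongr
      exact inter_subset_right
  calc rieszKernel d γ (ball 0 a) e
      ≤ ∫⁻ v, (Ioi T).indicator (fun v ↦ volume (ball (0 : EuclideanSpace ℝ (Fin d)) a)
          * ENNReal.ofReal (v ^ (-γ))) v :=
        (setLIntegral_mono' measurableSet_Ioi hle).trans (setLIntegral_le_lintegral _ _)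
    _ = volume (ball (0 : EuclideanSpace ℝ (Fin d)) a)
          * ∫⁻ v in Ioi T, ENNReal.ofReal (v ^ (-γ)) := by
        rw [lintegral_indicator measurableSet_Ioi, lintegral_const_mul' _ _ measure_ball_lt_top.ne]
    _ < ⊤ := ENNReal.mul_lt_top measure_ball_lt_top
        (integrableOn_Ioi_rpow_of_lt (by linarith) hT).lintegral_lt_top

end rieszKernel

-- On the diagonal no comparison is needed: `‖0‖₊ ^ s = ∞` for `s < 0`.
theorem lintegral_lintegral_sub_lt_top_of_le_mul_rpow {E : Type*} [NormedAddCommGroup E]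
    [MeasurableSpace E] {μ ν : Measure E} {k : E → ℝ≥0∞} {M : ℝ≥0∞} {s : ℝ} (hM : M ≠ ⊤)
    (hs : s < 0) (hk : ∀ z ≠ 0, k z ≤ M * ENNReal.ofReal (‖z‖ ^ s))
    (h : ∫⁻ x, ∫⁻ y, (‖x - y‖₊ : ℝ≥0∞) ^ s ∂ν ∂μ < ⊤) :
    ∫⁻ x, ∫⁻ y, k (x - y) ∂ν ∂μ < ⊤ := by
  have hM1 : M + 1 ≠ ⊤ := ENNReal.add_ne_top.mpr ⟨hM, ENNReal.one_ne_top⟩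
  have hk' : ∀ z, k z ≤ (M + 1) * (‖z‖₊ : ℝ≥0∞) ^ s := by
    intro z
    rcases eq_or_ne z 0 with rfl | hz
    · simp [ENNReal.zero_rpow_of_neg hs]
    · calc k z ≤ M * ENNReal.ofReal (‖z‖ ^ s) := hk z hz
        _ ≤ (M + 1) * (‖z‖₊ : ℝ≥0∞) ^ s := by
          rw [← ENNReal.ofReal_coe_nnreal, coe_nnnorm,
            ← ENNReal.ofReal_rpow_of_pos (norm_pos_iff.mpr hz)]
          gcongr
          exact le_self_add
  calc ∫⁻ x, ∫⁻ y, k (x - y) ∂ν ∂μ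
      ≤ ∫⁻ x, ∫⁻ y, (M + 1) * (‖x - y‖₊ : ℝ≥0∞) ^ s ∂ν ∂μ := by gcongr with x y; exact hk' _
    _ = (M + 1) * ∫⁻ x, ∫⁻ y, (‖x - y‖₊ : ℝ≥0∞) ^ s ∂ν ∂μ := by
        simp_rw [lintegral_const_mul' _ _ hM1]
    _ < ⊤ := ENNReal.mul_lt_top hM1.lt_top h

theorem rieszKernel_bound_and_energy_finite_general
    (d : ℕ) (hd : 0 < d)
    (C : Set (EuclideanSpace ℝ (Fin d)))
    (γ : ℝ) (hγ1 : 1 < γ)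
    (a : ℝ) (ha : 0 < a)
    (hCa : C ⊆ Metric.ball (0 : EuclideanSpace ℝ (Fin d)) a) :
    (∀ e₁ : EuclideanSpace ℝ (Fin d), ‖e₁‖ = 1 →
      rieszKernel d γ (Metric.ball (0 : EuclideanSpace ℝ (Fin d)) a) e₁ < ⊤ ∧
      ∀ x : EuclideanSpace ℝ (Fin d), x ≠ 0 →
        rieszKernel d γ C x ≤
          rieszKernel d γ (Metric.ball (0 : EuclideanSpace ℝ (Fin d)) a) e₁ *
            ENNReal.ofReal (‖x‖ ^ (-(γ - 1) * (d:ℝ)))) ∧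
    (∀ φ : MeasureTheory.SignedMeasure (EuclideanSpace ℝ (Fin d)),
      (∫⁻ x, ∫⁻ y, (‖x - y‖₊ : ℝ≥0∞) ^ (-(γ - 1) * (d:ℝ))
          ∂φ.totalVariation ∂φ.totalVariation) < ⊤ →
      (∫⁻ x, ∫⁻ y, rieszKernel d γ C (x - y)
          ∂φ.totalVariation ∂φ.totalVariation) < ⊤) := by
  refine ⟨fun e he ↦ ⟨rieszKernel_ball_lt_top hd.ne' hγ1 ha he,
    fun x hx ↦ rieszKernel_le_ball_mul_norm_rpow hd.ne' hCa he hx⟩, fun φ hφ ↦ ?_⟩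
  have he : ‖EuclideanSpace.single (⟨0, hd⟩ : Fin d) (1 : ℝ)‖ = 1 := by simp
  have hs : -(γ - 1) * (d:ℝ) < 0 :=
    mul_neg_of_neg_of_pos (by linarith) (Nat.cast_pos.mpr hd)
  exact lintegral_lintegral_sub_lt_top_of_le_mul_rpow
    (rieszKernel_ball_lt_top hd.ne' hγ1 ha he).ne hs
    (fun z hz ↦ rieszKernel_le_ball_mul_norm_rpow hd.ne' hCa he hz) hφ

theorem rieszKernel_bound_and_energy_finite
    (d : ℕ) (hd : 0 < d)
    (C : Set (EuclideanSpace ℝ (Fin d)))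
    (hCm : MeasurableSet C) (hCb : Bornology.IsBounded C)
    (γ : ℝ) (hγ1 : 1 < γ) (hγ2 : γ < 2)
    (a : ℝ) (ha : 0 < a)
    (hCa : C ⊆ Metric.ball (0 : EuclideanSpace ℝ (Fin d)) a) :
    (∀ e₁ : EuclideanSpace ℝ (Fin d), ‖e₁‖ = 1 →
      rieszKernel d γ (Metric.ball (0 : EuclideanSpace ℝ (Fin d)) a) e₁ < ⊤ ∧
      ∀ x : EuclideanSpace ℝ (Fin d), x ≠ 0 →
        rieszKernel d γ C x ≤
          rieszKernel d γ (Metric.ball (0 : EuclideanSpace ℝ (Fin d)) a) e₁ *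
            ENNReal.ofReal (‖x‖ ^ (-(γ - 1) * (d:ℝ)))) ∧
    (∀ φ : MeasureTheory.SignedMeasure (EuclideanSpace ℝ (Fin d)),
      (∫⁻ x, ∫⁻ y, (‖x - y‖₊ : ℝ≥0∞) ^ (-(γ - 1) * (d:ℝ))
          ∂φ.totalVariation ∂φ.totalVariation) < ⊤ →
      (∫⁻ x, ∫⁻ y, rieszKernel d γ C (x - y)
          ∂φ.totalVariation ∂φ.totalVariation) < ⊤) :=
  rieszKernel_bound_and_energy_finite_general d hd C γ hγ1 a ha hCa
end
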